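/- arXiv:2512.13201 — 6 statements merged into one kernel-verified Lean document; each statement's English description precedes it below -/
import Mathlib

section
/- For odd d and any j, the matrix sum Σ_{k=0}^{d−1} D_{j,k} equals d times the matrix whose (r,s) entry is δ_{r, 2⁻¹ j} δ_{s, −2⁻¹ j}, where 2⁻¹ is the inverse of 2 modulo d. -/
open Matrix Finset ComplexConjugate

noncomputable section

/-- ω = exp(2πi/d) -/
def omg (d : ℕ) : ℂ := Complex.exp (2 * Real.pi * Complex.I / d)

/-- τ = -exp(πi/d) -/
def tau (d : ℕ) : ℂ := -Complex.exp (Real.pi * Complex.I / d)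

/-- The clock matrix `Z`, with `Z|r⟩ = ω^r |r⟩`. -/
def Zmat (d : ℕ) [NeZero d] : Matrix (ZMod d) (ZMod d) ℂ :=
  Matrix.diagonal fun r => omg d ^ r.val

/-- The shift matrix `X`, with `X|r⟩ = |r+1⟩` (indices mod d). -/
def Xmat (d : ℕ) [NeZero d] : Matrix (ZMod d) (ZMod d) ℂ :=
  Matrix.of fun r s => if r = s + 1 then 1 else 0

/-- The displacement operators `D_{j,k} = τ^{jk} X^j Z^k`. -/
def Dmat (d : ℕ) [NeZero d] (j k : ZMod d) : Matrix (ZMod d) (ZMod d) ℂ :=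
  tau d ^ (j.val * k.val) • (Xmat d ^ j.val * Zmat d ^ k.val)

/-- Standard Hermitian inner product, conjugate-linear in the first argument. -/
def ip {d : ℕ} [NeZero d] (u w : ZMod d → ℂ) : ℂ := ∑ k, conj (u k) * w k

/-! Since `d` is odd, `τ = -e^{πi/d} = e^{πi(d+1)/d} = ω^{(d+1)/2}` and `(d+1)/2 ≡ 2⁻¹ (mod d)`, so the
`(r, s)` entry of `D_{j,k}` is `[r = s + j] · ω^{k(2⁻¹j + s)}`. Summing over `k` is then the
orthogonality relation for the standard additive character `k ↦ ω^k` of `ZMod d`. -/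

namespace ZMod

variable {d : ℕ}

lemma two_mul_natCast_succ_div_two (hd : Odd d) : (2 : ZMod d) * ((d + 1) / 2 : ℕ) = 1 := by
  obtain ⟨m, rfl⟩ := hd
  rw [show (2 * m + 1 + 1) / 2 = m + 1 by omega]
  linear_combination (norm := (push_cast; ring_nf)) natCast_self (2 * m + 1)

lemma natCast_succ_div_two_eq_inv_two (hd : Odd d) : (((d + 1) / 2 : ℕ) : ZMod d) = 2⁻¹ :=
  (ZMod.inv_eq_of_mul_eq_one _ _ _ (two_mul_natCast_succ_div_two hd)).symm

lemma two_mul_inv_two (hd : Odd d) : (2 : ZMod d) * 2⁻¹ = 1 := by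
  rw [← natCast_succ_div_two_eq_inv_two hd, two_mul_natCast_succ_div_two hd]

end ZMod

section

variable {d : ℕ} [NeZero d]

lemma Xmat_pow_apply (n : ℕ) (r s : ZMod d) :
    (Xmat d ^ n) r s = if r = s + n then 1 else 0 := by
  induction n generalizing s with
  | zero => simp [Matrix.one_apply]
  | succ n ih =>
    rw [pow_succ, mul_apply, Finset.sum_eq_single (s + 1)]
    · rw [ih]
      simp [Xmat, add_assoc, add_comm (1 : ZMod d)]
    · intro t _ ht
      simp [Xmat, ht]
    · simp

lemma Xmat_pow_mul_Zmat_pow_apply (m n : ℕ) (r s : ZMod d) :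
    (Xmat d ^ m * Zmat d ^ n) r s = if r = s + m then omg d ^ (s.val * n) else 0 := by
  rw [Zmat, diagonal_pow, mul_diagonal, Xmat_pow_apply, Pi.pow_apply, ← pow_mul]
  split_ifs <;> simp

lemma omg_pow_eq_stdAddChar (n : ℕ) : omg d ^ n = ZMod.stdAddChar (n : ZMod d) := by
  rw [omg, ← Complex.exp_nat_mul, ZMod.stdAddChar_apply, ZMod.toCircle_natCast]
  congr 1
  ring

lemma tau_eq_omg_pow (hd : Odd d) : tau d = omg d ^ ((d + 1) / 2) := by
  obtain ⟨m, rfl⟩ := hd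
  have hd_ne : ((2 * m + 1 : ℕ) : ℂ) ≠ 0 := Nat.cast_ne_zero.mpr (by omega)
  rw [tau, omg, ← Complex.exp_nat_mul, show (2 * m + 1 + 1) / 2 = m + 1 by omega,
    ← neg_one_mul, ← Complex.exp_pi_mul_I, ← Complex.exp_add]
  congr 1
  field_simp
  push_cast
  ring

lemma Dmat_apply (hd : Odd d) (j k r s : ZMod d) :
    Dmat d j k r s = if r = s + j then ZMod.stdAddChar (k * (2⁻¹ * j + s)) else 0 := by
  rw [Dmat, Matrix.smul_apply, Xmat_pow_mul_Zmat_pow_apply, ZMod.natCast_zmod_val, smul_eq_mul,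
    mul_ite, mul_zero, tau_eq_omg_pow hd, ← pow_mul, ← pow_add, omg_pow_eq_stdAddChar]
  push_cast
  simp only [ZMod.natCast_succ_div_two_eq_inv_two hd, ZMod.natCast_zmod_val]
  congr 2
  ring

end

/-- for odd d, `Σ_{k=0}^{d-1} D_{j,k}` equals d times the matrix
with (r,s) entry `δ_{r, 2⁻¹ j} δ_{s, −2⁻¹ j}`, where `2⁻¹` is the inverse of 2 mod d. -/
theorem sum_displacement_row (d : ℕ) [NeZero d] (hd : Odd d) (j : ZMod d) :
    ∑ k : ZMod d, Dmat d j k =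
      (d : ℂ) • Matrix.of (fun r s : ZMod d =>
        if r = (2 : ZMod d)⁻¹ * j ∧ s = -((2 : ZMod d)⁻¹ * j) then (1 : ℂ) else 0) := by
  ext r s
  simp only [Matrix.sum_apply, Dmat_apply hd, Finset.sum_ite_irrel, Finset.sum_const_zero,
    AddChar.sum_mulShift _ (ZMod.isPrimitive_stdAddChar d), ZMod.card, Matrix.smul_apply, of_apply,
    smul_eq_mul, add_eq_zero_iff_eq_neg']
  by_cases hs : s = -((2 : ZMod d)⁻¹ * j)
  · have hr : s + j = (2 : ZMod d)⁻¹ * j := by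
      linear_combination hs - j * ZMod.two_mul_inv_two hd
    rw [hr]
    simp [hs]
  · simp [hs]
end
end

section
/- If a vector ψ in C^d satisfies the almost flat Ansatz ψ = N(√x₀, v₁, …, v_{d−1}) with x₀ = −2−√(d+1), |v_j| = 1, v_{−j} = −v_j*, and N² = 1/(d−1−x₀), then for every k ≠ 0 (mod d), √(d+1)·⟨ψ|Z^k|ψ⟩ = 1. -/
open Matrix Finset ComplexConjugate

noncomputable section

/-!
Since `Z^k` is diagonal, `⟨ψ|Z^k|ψ⟩ = ∑_r |ψ_r|² ω^{kr}`. Off `r = 0` the Ansatz makes `|ψ_r|² = N²`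
constant, and the full character sum `∑_r ω^{kr}` vanishes for `k ≠ 0`, so only the excess
`|ψ_0|² - N² = N²(|x₀| - 1) = N²(1 + √(d+1))` survives. With `s = √(d+1)` the normalisation reads
`N² = 1/(d + 1 + s) = 1/(s(s+1))`, whence `s⟨ψ|Z^k|ψ⟩ = 1`.
-/

theorem ZMod.sum_val_eq_sum_range {M : Type*} [AddCommMonoid M] (d : ℕ) [NeZero d] (f : ℕ → M) :
    ∑ r : ZMod d, f r.val = ∑ i ∈ range d, f i :=
  Finset.sum_nbij (·.val) (fun r _ => mem_range.2 r.val_lt) (ZMod.val_injective d).injOn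
    (fun i hi => ⟨i, mem_coe.2 (mem_univ _), ZMod.val_cast_of_lt (mem_range.1 hi)⟩)
    (fun _ _ => rfl)

section CharacterSums

variable {K : Type*} [Field K] {d : ℕ} [NeZero d] {ζ : K}

theorem sum_pow_val_eq_zero (hζd : ζ ^ d = 1) (hζ : ζ ≠ 1) : ∑ r : ZMod d, ζ ^ r.val = 0 := by
  rw [ZMod.sum_val_eq_sum_range d (ζ ^ ·), geom_sum_eq hζ, hζd, sub_self, zero_div]

theorem sum_mul_pow_val_of_eq_of_ne_zero (hζd : ζ ^ d = 1) (hζ : ζ ≠ 1) {w : ZMod d → K} {c : K}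
    (hw : ∀ r, r ≠ 0 → w r = c) : ∑ r : ZMod d, w r * ζ ^ r.val = w 0 - c := by
  have hsplit : ∀ r : ZMod d, w r * ζ ^ r.val = (w r - c) * ζ ^ r.val + c * ζ ^ r.val :=
    fun r => by ring
  rw [sum_congr rfl fun r _ => hsplit r, sum_add_distrib, ← mul_sum, sum_pow_val_eq_zero hζd hζ,
    mul_zero, add_zero, sum_eq_single 0 (fun r _ hr => by rw [hw r hr, sub_self, zero_mul])
      (fun h => absurd (mem_univ 0) h)]
  simp

end CharacterSums

theorem isPrimitiveRoot_omg (d : ℕ) [NeZero d] : IsPrimitiveRoot (omg d) d := by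
  simpa [omg] using Complex.isPrimitiveRoot_exp d (NeZero.ne d)

theorem omg_pow_pow_eq_one (d n : ℕ) [NeZero d] : (omg d ^ n) ^ d = 1 := by
  rw [← pow_mul, mul_comm, pow_mul, (isPrimitiveRoot_omg d).pow_eq_one, one_pow]

theorem omg_pow_val_ne_one {d : ℕ} [NeZero d] {k : ZMod d} (hk : k ≠ 0) : omg d ^ k.val ≠ 1 :=
  (isPrimitiveRoot_omg d).pow_ne_one_of_pos_of_lt ((ZMod.val_ne_zero k).2 hk) k.val_lt

theorem Zmat_pow (d n : ℕ) [NeZero d] : Zmat d ^ n = diagonal fun r => (omg d ^ n) ^ r.val := by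
  simp only [Zmat, diagonal_pow, Pi.pow_def, ← pow_mul, mul_comm]

theorem ip_diagonal_mulVec {d : ℕ} [NeZero d] (u w : ZMod d → ℂ) :
    ip u (diagonal w *ᵥ u) = ∑ r, (‖u r‖ ^ 2 : ℝ) * w r := by
  refine sum_congr rfl fun r _ => ?_
  rw [mulVec_diagonal, Complex.ofReal_pow, ← Complex.conj_mul']
  ring

theorem zoverlap_of_ansatz_general (d : ℕ) [NeZero d]
    (N : ℝ)
    (hN : N ^ 2 = 1 / ((d : ℝ) - 1 - (-2 - Real.sqrt (d + 1))))
    (v ψ : ZMod d → ℂ)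
    (hψ : ∀ r, ψ r = (N : ℂ) * v r)
    (hv0 : v 0 = Complex.I * Real.sqrt (2 + Real.sqrt (d + 1)))
    (hvmod : ∀ j : ZMod d, j ≠ 0 → ‖v j‖ = 1) :
    ∀ k : ZMod d, k ≠ 0 →
      (Real.sqrt (d + 1) : ℂ) * ip ψ ((Zmat d ^ k.val) *ᵥ ψ) = 1 := by
  intro k hk
  set s := Real.sqrt (d + 1)
  have hs2 : s ^ 2 = d + 1 := Real.sq_sqrt (by positivity)
  have hψnorm : ∀ r, ‖ψ r‖ ^ 2 = N ^ 2 * ‖v r‖ ^ 2 := fun r => by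
    rw [hψ, norm_mul, Complex.norm_real, Real.norm_eq_abs, mul_pow, sq_abs]
  have hv0norm : ‖v 0‖ ^ 2 = 2 + s := by
    rw [hv0, norm_mul, Complex.norm_I, one_mul, Complex.norm_real, Real.norm_eq_abs, sq_abs,
      Real.sq_sqrt (by positivity)]
  have hoverlap : ip ψ ((Zmat d ^ k.val) *ᵥ ψ) = ((N ^ 2 * (1 + s) : ℝ) : ℂ) := by
    rw [Zmat_pow, ip_diagonal_mulVec, sum_mul_pow_val_of_eq_of_ne_zero (omg_pow_pow_eq_one d _)
      (omg_pow_val_ne_one hk) (c := ((N ^ 2 : ℝ) : ℂ))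
      (fun r hr => by rw [hψnorm, hvmod r hr, one_pow, mul_one]), hψnorm, hv0norm]
    push_cast
    ring
  have hden : (d : ℝ) - 1 - (-2 - s) = s * (s + 1) := by linear_combination -hs2
  have hs : 0 < s := Real.sqrt_pos.2 (by positivity)
  have hreal : s * (N ^ 2 * (1 + s)) = 1 := by
    rw [hN, hden]
    field_simp
    ring
  rw [hoverlap, ← Complex.ofReal_mul, hreal, Complex.ofReal_one]

/-- a vector obeying the almost flat Ansatz satisfies
`√(d+1)⟨ψ|Z^k|ψ⟩ = 1` for every k ≠ 0 (mod d). -/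
theorem zoverlap_of_ansatz (d : ℕ) [NeZero d] (hd : 2 ≤ d)
    (N : ℝ) (hNpos : 0 < N)
    (hN : N ^ 2 = 1 / ((d : ℝ) - 1 - (-2 - Real.sqrt (d + 1))))
    (v ψ : ZMod d → ℂ)
    (hψ : ∀ r, ψ r = (N : ℂ) * v r)
    (hv0 : v 0 = Complex.I * Real.sqrt (2 + Real.sqrt (d + 1)))
    (hvmod : ∀ j : ZMod d, j ≠ 0 → ‖v j‖ = 1)
    (hvneg : ∀ j : ZMod d, j ≠ 0 → v (-j) = -conj (v j)) :
    ∀ k : ZMod d, k ≠ 0 →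
      (Real.sqrt (d + 1) : ℂ) * ip ψ ((Zmat d ^ k.val) *ᵥ ψ) = 1 :=
  zoverlap_of_ansatz_general d N hN v ψ hψ hv0 hvmod
end
end

section
/- (Perron's Satz 1) Let p be a prime with p ≡ 3 (mod 4) and let a be an integer coprime to p. Let R = {r ∈ Z/pZ : r = 0 or r is a quadratic residue mod p}, a set of size (p+1)/2. Then among the (p+1)/2 elements r + a for r ∈ R, exactly (p+1)/4 lie in R and exactly (p+1)/4 are quadratic non-residues. -/
open Finset

lemma myQuadChar_inv {F : Type*} [Field F] [Fintype F] [DecidableEq F] :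
    (quadraticChar F)⁻¹ = quadraticChar F := by
  apply MulChar.ext'
  intro a
  rw [MulChar.inv_apply_eq_inv]
  rcases eq_or_ne a 0 with h | h
  · simp [h]
  · have hinv : Ring.inverse (-1 : ℤ) = -1 := by
      have := Ring.inverse_unit (-1 : ℤˣ); simpa using this
    rcases quadraticChar_dichotomy h with h1 | h1 <;> simp [h1, hinv]

lemma mySumShift {F : Type*} [Field F] [Fintype F] [DecidableEq F]
    (hF : ringChar F ≠ 2) {a : F} (ha : a ≠ 0) :
    ∑ x : F, (quadraticChar F x : ℤ) * quadraticChar F (x + a) = -1 := by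
  set χ := quadraticChar F with hχ
  have hJ : jacobiSum χ χ = - χ (-1) := by
    have := jacobiSum_nontrivial_inv (quadraticChar_ne_one hF)
    rwa [myQuadChar_inv] at this
  have hneg : (-a : F) ≠ 0 := neg_ne_zero.mpr ha
  have key : ∑ t : F, ((χ (-1) * (χ a * χ a)) * (χ t * χ (1 - t)) : ℤ)
      = ∑ x : F, (χ x : ℤ) * χ (x + a) := by
    apply Fintype.sum_equiv (Equiv.mulLeft₀ (-a) hneg)
    intro t
    have e1 : (Equiv.mulLeft₀ (-a) hneg) t = -a * t := rfl
    rw [e1, show (-a * t : F) = (-1) * a * t by ring,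
      show ((-1) * a * t + a : F) = a * (1 - t) by ring]
    simp only [map_mul]
    ring
  rw [← key, ← Finset.mul_sum]
  have hjs : ∑ t : F, (χ t : ℤ) * χ (1 - t) = jacobiSum χ χ := rfl
  rw [hjs, hJ]
  have h1 : (χ (-1) : ℤ) * χ (-1) = 1 := by
    rw [← map_mul]; norm_num
  have h2 : (χ a : ℤ) * χ a = 1 := by
    rw [← map_mul, ← pow_two]
    exact_mod_cast congrArg (Int.cast) (quadraticChar_sq_one' (F := F) ha)
  nlinarith [h1, h2]

open Classical in
/-- Perron's Satz 1: for a prime p ≡ 3 (mod 4) and a coprime to p,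
the set R of "Reste" (0 together with the quadratic residues) has (p+1)/2 elements,
and among the shifted elements r + a for r ∈ R, exactly (p+1)/4 are again Reste and
exactly (p+1)/4 are non-residues. -/
theorem perron_satz1 (p : ℕ) [NeZero p] (hp : p.Prime) (hp4 : p % 4 = 3)
    (a : ZMod p) (ha : a ≠ 0) :
    (Finset.univ.filter (fun r : ZMod p => r = 0 ∨ IsSquare r)).card = (p + 1) / 2 ∧
    (Finset.univ.filter (fun r : ZMod p =>
        (r = 0 ∨ IsSquare r) ∧ (r + a = 0 ∨ IsSquare (r + a)))).card = (p + 1) / 4 ∧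
    (Finset.univ.filter (fun r : ZMod p =>
        (r = 0 ∨ IsSquare r) ∧ (r + a ≠ 0 ∧ ¬IsSquare (r + a)))).card = (p + 1) / 4 := by
  haveI : Fact p.Prime := ⟨hp⟩
  set χ := quadraticChar (ZMod p) with hχ
  have hchar : ringChar (ZMod p) ≠ 2 := by rw [ZMod.ringChar_zmod_n]; omega
  have hm1 : ¬ IsSquare (-1 : ZMod p) := by
    rw [ZMod.exists_sq_eq_neg_one_iff]; omega
  have hχm1 : χ (-1) = -1 := quadraticChar_neg_one_iff_not_isSquare.mpr hm1
  have hχa : χ (-a) = - χ a := by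
    rw [show (-a : ZMod p) = -1 * a by ring, map_mul, hχm1]; ring
  -- pointwise indicator identity
  have hFval : ∀ x : ZMod p, (if x = 0 ∨ IsSquare x then (2:ℤ) else 0)
      = 1 + χ x + (if x = 0 then 1 else 0) := by
    intro x
    by_cases hx : x = 0
    · simp [hx, hχ, quadraticChar_zero]
    · by_cases hs : IsSquare x
      · rw [hχ, (quadraticChar_one_iff_isSquare hx).mpr hs]; simp [hx, hs]
      · rw [hχ, quadraticChar_neg_one_iff_not_isSquare.mpr hs]; simp [hx, hs]
  -- basic sums
  have S0 : ∑ x : ZMod p, (χ x : ℤ) = 0 := quadraticChar_sum_zero hchar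
  have S1 : ∑ x : ZMod p, (χ (x + a) : ℤ) = 0 :=
    (Fintype.sum_equiv (Equiv.addRight a) _ _ fun x => rfl).trans S0
  have S2 : ∑ x : ZMod p, (χ x : ℤ) * χ (x + a) = -1 := mySumShift hchar ha
  have Sconst : ∑ _x : ZMod p, (1 : ℤ) = p := by
    simp [Finset.card_univ, ZMod.card p]
  -- card 1
  have hC1 : 2 * (((univ : Finset (ZMod p)).filter (fun r => r = 0 ∨ IsSquare r)).card : ℤ)
      = p + 1 := by
    rw [Finset.card_filter]
    push_cast
    rw [Finset.mul_sum]
    have : ∀ x : ZMod p, 2 * (if x = 0 ∨ IsSquare x then (1:ℤ) else 0)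
        = 1 + χ x + (if x = 0 then 1 else 0) := by
      intro x
      rw [← hFval x]; split_ifs <;> ring
    rw [Finset.sum_congr rfl fun x _ => this x, Finset.sum_add_distrib, Finset.sum_add_distrib,
      S0, Sconst]
    simp
  -- card 2
  have hC2 : 4 * (((univ : Finset (ZMod p)).filter (fun r =>
      (r = 0 ∨ IsSquare r) ∧ (r + a = 0 ∨ IsSquare (r + a)))).card : ℤ) = p + 1 := by
    rw [Finset.card_filter]
    push_cast
    rw [Finset.mul_sum]
    have step1 : ∀ x : ZMod p,
        4 * (if (x = 0 ∨ IsSquare x) ∧ (x + a = 0 ∨ IsSquare (x + a)) then (1:ℤ) else 0)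
        = (1 + χ x + (if x = 0 then 1 else 0)) * (1 + χ (x + a) + (if x + a = 0 then 1 else 0)) := by
      intro x
      rw [← hFval x, ← hFval (x + a)]
      by_cases h1 : x = 0 ∨ IsSquare x <;> by_cases h2 : x + a = 0 ∨ IsSquare (x + a) <;>
        simp [h1, h2]
    have step2 : ∀ x : ZMod p,
        (1 + χ x + (if x = 0 then (1:ℤ) else 0)) * (1 + χ (x + a) + (if x + a = 0 then 1 else 0))
        = 1 + χ x + χ (x + a) + χ x * χ (x + a)
          + (if x = 0 then 1 + χ (x + a) + (if x + a = 0 then (1:ℤ) else 0) else 0)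
          + (if x = -a then 1 + χ x else 0) := by
      intro x
      have hxa : (x + a = 0) = (x = -a) := by
        rw [add_eq_zero_iff_eq_neg]
      simp only [hxa]
      by_cases h1 : x = 0 <;> by_cases h2 : x = -a <;> simp [h1, h2, ha, hχ, quadraticChar_zero] <;> ring
    rw [Finset.sum_congr rfl fun x _ => step1 x, Finset.sum_congr rfl fun x _ => step2 x]
    rw [Finset.sum_add_distrib, Finset.sum_add_distrib, Finset.sum_add_distrib,
      Finset.sum_add_distrib, Finset.sum_add_distrib,
      S0, S1, S2, Sconst, Finset.sum_ite_eq' univ (0 : ZMod p), Finset.sum_ite_eq' univ (-a)]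
    simp only [mem_univ, if_true, zero_add, hχa]
    rw [if_neg ha]
    ring
  -- partition
  have hC3 : ((univ : Finset (ZMod p)).filter (fun r =>
        (r = 0 ∨ IsSquare r) ∧ (r + a = 0 ∨ IsSquare (r + a)))).card
      + ((univ : Finset (ZMod p)).filter (fun r =>
        (r = 0 ∨ IsSquare r) ∧ (r + a ≠ 0 ∧ ¬IsSquare (r + a)))).card
      = ((univ : Finset (ZMod p)).filter (fun r => r = 0 ∨ IsSquare r)).card := by
    rw [Finset.card_filter, Finset.card_filter, Finset.card_filter, ← Finset.sum_add_distrib]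
    refine Finset.sum_congr rfl fun x _ => ?_
    by_cases hA : (x = 0 ∨ IsSquare x) <;> by_cases hB : (x + a = 0 ∨ IsSquare (x + a))
    · have hC : ¬(x + a ≠ 0 ∧ ¬IsSquare (x + a)) := by tauto
      simp [hA, hB, hC]
    · have hC : x + a ≠ 0 ∧ ¬IsSquare (x + a) := by tauto
      simp [hA, hB, hC]
    · simp [hA]
    · simp [hA]
  have n1 : 2 * ((univ : Finset (ZMod p)).filter (fun r : ZMod p => r = 0 ∨ IsSquare r)).card
      = p + 1 := by exact_mod_cast hC1
  have n2 : 4 * ((univ : Finset (ZMod p)).filter (fun r : ZMod p =>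
      (r = 0 ∨ IsSquare r) ∧ (r + a = 0 ∨ IsSquare (r + a)))).card = p + 1 := by
    exact_mod_cast hC2
  refine ⟨by omega, by omega, by omega⟩
end

section
/- (Perron's Satz 2) Let p be a prime with p ≡ 3 (mod 4) and let a be an integer coprime to p. Let N be the set of quadratic non-residues mod p, of size (p−1)/2. Then among the elements n + a for n ∈ N, exactly (p+1)/4 are 'Reste' (i.e. 0 or a quadratic residue) and exactly (p−3)/4 are non-residues. -/
/-!
With `χ` the quadratic character of a finite field of odd order `q`, the indicator of the
non-squares is `(χ² - χ) / 2`. Hence four times the number of `n` with `n` and `n + a` both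
non-squares is a sum of four character sums; three are elementary, and the fourth,
`∑ χ(n) χ(n + a) = -1`, is the Jacobi sum `J(χ, χ) = -χ(-1)` after the substitution `n = -a m`.
This gives `q - 3 + χ(a) + χ(-a)`, which is `q - 3` when `q ≡ 3 (mod 4)` since then
`χ(-1) = -1`. The shifts landing on `0` or a square are the remaining non-squares.
-/

open Finset

theorem ne_zero_and_not_isSquare_iff {M₀ : Type*} [MulZeroClass M₀] {x : M₀} :
    x ≠ 0 ∧ ¬IsSquare x ↔ ¬IsSquare x :=
  and_iff_right_of_imp fun hx h0 => hx (h0 ▸ IsSquare.zero)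

theorem eq_zero_or_isSquare_iff {M₀ : Type*} [MulZeroClass M₀] {x : M₀} :
    x = 0 ∨ IsSquare x ↔ IsSquare x :=
  or_iff_right_of_imp fun h0 => h0 ▸ IsSquare.zero

section

variable {F : Type*} [Field F] [Fintype F]

theorem ringChar_ne_two_of_card_mod_four (hF4 : Fintype.card F % 4 = 3) : ringChar F ≠ 2 :=
  fun h => by have := FiniteField.even_card_of_char_two h; omega

variable [DecidableEq F]

local notation "χ" => quadraticChar F

theorem sum_quadraticChar_add (hF : ringChar F ≠ 2) (a : F) : ∑ x, χ (x + a) = 0 :=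
  (Equiv.sum_comp (Equiv.addRight a) χ).trans (quadraticChar_sum_zero hF)

theorem sum_quadraticChar_sq_mul (f : F → ℤ) : ∑ x, χ x ^ 2 * f x = ∑ x, f x - f 0 := by
  rw [eq_sub_iff_add_eq, ← Fintype.sum_ite_eq' 0 f, ← sum_add_distrib]
  refine sum_congr rfl fun x _ => ?_
  rcases eq_or_ne x 0 with rfl | hx
  · simp
  · rw [quadraticChar_sq_one hx, if_neg hx]; ring

theorem sum_quadraticChar_sq : ∑ x : F, χ x ^ 2 = Fintype.card F - 1 := by
  simpa using sum_quadraticChar_sq_mul (F := F) fun _ => 1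

theorem sum_quadraticChar_sq_add (a : F) : ∑ x, χ (x + a) ^ 2 = Fintype.card F - 1 :=
  (Equiv.sum_comp (Equiv.addRight a) (χ · ^ 2)).trans sum_quadraticChar_sq

theorem sum_quadraticChar_mul_add (hF : ringChar F ≠ 2) {a : F} (ha : a ≠ 0) :
    ∑ x, χ x * χ (x + a) = -1 := by
  have hJ : jacobiSum χ χ = -χ (-1) := by
    simpa [(quadraticChar_isQuadratic F).inv] using
      jacobiSum_nontrivial_inv (quadraticChar_ne_one hF)
  have hscale (y : F) : χ (-a * y) * χ (-a * y + a) = χ (-1) * (χ y * χ (1 - y)) := by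
    rw [show -a * y + a = a * (1 - y) by ring, show -a * y = -1 * a * y by ring]
    simp only [map_mul]
    linear_combination (χ (-1) * χ y * χ (1 - y)) * quadraticChar_sq_one ha
  rw [← Equiv.sum_comp (Equiv.mulLeft₀ (-a) (neg_ne_zero.mpr ha))]
  simp only [Equiv.mulLeft₀_apply, hscale, ← mul_sum]
  rw [← jacobiSum, hJ]
  linear_combination -quadraticChar_sq_one (neg_ne_zero.mpr (one_ne_zero (α := F)))

theorem two_mul_ite_not_isSquare (x : F) :
    2 * (if ¬IsSquare x then 1 else 0 : ℤ) = χ x ^ 2 - χ x := by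
  rcases eq_or_ne x 0 with rfl | hx
  · simp
  by_cases hsq : IsSquare x
  · simp [hsq, (quadraticChar_one_iff_isSquare hx).mpr hsq]
  · simp [hsq, quadraticChar_neg_one_iff_not_isSquare.mpr hsq]

theorem two_mul_card_not_isSquare (hF : ringChar F ≠ 2) :
    2 * (#{x : F | ¬IsSquare x} : ℤ) = Fintype.card F - 1 := by
  rw [natCast_card_filter, mul_sum]
  simp only [two_mul_ite_not_isSquare, sum_sub_distrib, sum_quadraticChar_sq,
    quadraticChar_sum_zero hF, sub_zero]

theorem four_mul_card_not_isSquare_and_not_isSquare_add (hF : ringChar F ≠ 2) {a : F}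
    (ha : a ≠ 0) :
    4 * (#{x : F | ¬IsSquare x ∧ ¬IsSquare (x + a)} : ℤ)
      = Fintype.card F - 3 + χ a + χ (-a) := by
  have hprod (x : F) : 4 * (if ¬IsSquare x ∧ ¬IsSquare (x + a) then 1 else 0 : ℤ)
      = (χ x ^ 2 - χ x) * (χ (x + a) ^ 2 - χ (x + a)) := by
    rw [← two_mul_ite_not_isSquare, ← two_mul_ite_not_isSquare,
      mul_mul_mul_comm, ite_zero_mul_ite_zero, mul_one]
    norm_num
  have hsq_sq : ∑ x, χ x ^ 2 * χ (x + a) ^ 2 = Fintype.card F - 2 := by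
    rw [sum_quadraticChar_sq_mul, sum_quadraticChar_sq_add, zero_add, quadraticChar_sq_one ha]
    ring
  have hsq_lin : ∑ x, χ x ^ 2 * χ (x + a) = -χ a := by
    rw [sum_quadraticChar_sq_mul, sum_quadraticChar_add hF, zero_add, zero_sub]
  have hlin_sq : ∑ x, χ x * χ (x + a) ^ 2 = -χ (-a) := by
    rw [← Equiv.sum_comp (Equiv.addRight (-a))]
    simp only [Equiv.coe_addRight, neg_add_cancel_right, mul_comm _ (χ _ ^ 2)]
    rw [sum_quadraticChar_sq_mul, sum_quadraticChar_add hF, zero_add, zero_sub]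
  rw [natCast_card_filter, mul_sum]
  simp only [hprod, mul_sub, sub_mul, sum_sub_distrib]
  rw [hsq_sq, hsq_lin, hlin_sq, sum_quadraticChar_mul_add hF ha]
  ring

theorem quadraticChar_neg_of_card_mod_four (hF4 : Fintype.card F % 4 = 3) (x : F) :
    χ (-x) = -χ x := by
  have hneg_one : χ (-1) = -1 := quadraticChar_neg_one_iff_not_isSquare.mpr
    (FiniteField.isSquare_neg_one_iff.not.mpr (by omega))
  rw [neg_eq_neg_one_mul, map_mul, hneg_one, neg_one_mul]

theorem card_not_isSquare_of_card_mod_four (hF4 : Fintype.card F % 4 = 3) :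
    #{x : F | ¬IsSquare x} = (Fintype.card F - 1) / 2 := by
  have := two_mul_card_not_isSquare (ringChar_ne_two_of_card_mod_four hF4)
  omega

theorem card_not_isSquare_and_not_isSquare_add_of_card_mod_four
    (hF4 : Fintype.card F % 4 = 3) {a : F} (ha : a ≠ 0) :
    #{x : F | ¬IsSquare x ∧ ¬IsSquare (x + a)} = (Fintype.card F - 3) / 4 := by
  have := four_mul_card_not_isSquare_and_not_isSquare_add
    (ringChar_ne_two_of_card_mod_four hF4) ha
  rw [quadraticChar_neg_of_card_mod_four hF4, add_neg_cancel_right] at this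
  omega

theorem card_not_isSquare_and_isSquare_add_of_card_mod_four
    (hF4 : Fintype.card F % 4 = 3) {a : F} (ha : a ≠ 0) :
    #{x : F | ¬IsSquare x ∧ IsSquare (x + a)} = (Fintype.card F + 1) / 4 := by
  have hsplit := card_filter_add_card_filter_not (s := {x : F | ¬IsSquare x})
    fun x => IsSquare (x + a)
  simp only [filter_filter] at hsplit
  rw [card_not_isSquare_and_not_isSquare_add_of_card_mod_four hF4 ha,
    card_not_isSquare_of_card_mod_four hF4] at hsplit
  omega

end

open Classical in
/-- Perron's Satz 2: for a prime p ≡ 3 (mod 4) and a coprime to p,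
the set N of quadratic non-residues has (p−1)/2 elements, and among the shifted
elements n + a for n ∈ N, exactly (p+1)/4 are "Reste" (0 or a quadratic residue)
and exactly (p−3)/4 are non-residues. -/
theorem perron_satz2 (p : ℕ) [NeZero p] (hp : p.Prime) (hp4 : p % 4 = 3)
    (a : ZMod p) (ha : a ≠ 0) :
    (Finset.univ.filter (fun n : ZMod p => n ≠ 0 ∧ ¬IsSquare n)).card = (p - 1) / 2 ∧
    (Finset.univ.filter (fun n : ZMod p =>
        (n ≠ 0 ∧ ¬IsSquare n) ∧ (n + a = 0 ∨ IsSquare (n + a)))).card = (p + 1) / 4 ∧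
    (Finset.univ.filter (fun n : ZMod p =>
        (n ≠ 0 ∧ ¬IsSquare n) ∧ (n + a ≠ 0 ∧ ¬IsSquare (n + a)))).card = (p - 3) / 4 := by
  have : Fact p.Prime := ⟨hp⟩
  have hcard : Fintype.card (ZMod p) % 4 = 3 := by rwa [ZMod.card]
  simp only [ne_zero_and_not_isSquare_iff, eq_zero_or_isSquare_iff]
  rw [card_not_isSquare_of_card_mod_four hcard,
    card_not_isSquare_and_isSquare_add_of_card_mod_four hcard ha,
    card_not_isSquare_and_not_isSquare_add_of_card_mod_four hcard ha, ZMod.card]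
  exact ⟨rfl, rfl, rfl⟩
end

section
/- Let d = p ≡ 3 (mod 8) be prime and let v be the Legendre vector built from a unimodular x₁ and √x₀ (x₀ = −2−√(d+1)). Then for every j ≠ 0 with (j/d) = 1, ⟨v|X^{−2j}|v⟩ = (d−3)/2 − ((d−3)/4)·(1/x₁²) − ((d+1)/4)·x₁² + 2√x₀/x₁. -/
/-!
Away from `0` the Legendre vector is affine in the quadratic character `χ`:
`v k = α + β χ(k)` with `α = (x₁ - x₁⁻¹)/2`, `β = (x₁ + x₁⁻¹)/2`, and `conj (v k)` likewise.
The overlap is the correlation `∑ k, conj (v k) * v (k + 2j)`; expanding it, the sums of `χ`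
vanish and the Jacobsthal sum `∑ χ(k) χ(k + c)` is `-1` (a Jacobi sum `J(χ, χ)` in disguise),
so only the two terms meeting `v 0` and the constants `α, β` remain. For `p ≡ 3 (mod 8)` both
`2` and `-1` are non-residues, hence `χ(2j) = -1` and `χ(-2j) = 1`.
-/

open Matrix Finset ComplexConjugate

noncomputable section

section Shift

variable {d : ℕ} [NeZero d]

lemma Xmat_mulVec_apply (w : ZMod d → ℂ) (r : ZMod d) : (Xmat d *ᵥ w) r = w (r - 1) := by
  simp [Xmat, mulVec, dotProduct, ← sub_eq_iff_eq_add]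

lemma Xmat_pow_mulVec_apply (n : ℕ) (w : ZMod d → ℂ) (r : ZMod d) :
    (Xmat d ^ n *ᵥ w) r = w (r - n) := by
  induction n generalizing r with
  | zero => simp
  | succ n ih =>
    rw [pow_succ', ← mulVec_mulVec, Xmat_mulVec_apply, ih]
    rw [sub_sub, Nat.cast_succ, add_comm]

lemma ip_Xmat_pow_val_mulVec (u w : ZMod d → ℂ) (c : ZMod d) :
    ip u (Xmat d ^ c.val *ᵥ w) = ∑ k, conj (u k) * w (k - c) := by
  simp only [ip, Xmat_pow_mulVec_apply, ZMod.natCast_zmod_val]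

end Shift

section QuadraticChar

variable {F : Type*} [Field F] [Fintype F] [DecidableEq F]

lemma quadraticChar_sum_add (hF : ringChar F ≠ 2) (c : F) :
    ∑ r, quadraticChar F (r + c) = 0 :=
  (Equiv.sum_comp (Equiv.addRight c) (quadraticChar F)).trans (quadraticChar_sum_zero hF)

/-- The substitution `r = -c x` turns the sum into `χ(-1)` times the Jacobi sum `J(χ, χ)`. -/
lemma quadraticChar_sum_mul_add (hF : ringChar F ≠ 2) {c : F} (hc : c ≠ 0) :
    ∑ r, quadraticChar F r * quadraticChar F (r + c) = -1 := by
  have hJ : jacobiSum (quadraticChar F) (quadraticChar F) = -quadraticChar F (-1) := by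
    simpa [(quadraticChar_isQuadratic F).inv] using
      jacobiSum_nontrivial_inv (quadraticChar_ne_one hF)
  set χ := quadraticChar F
  have hsubst : ∀ x, χ (-c * x) * χ (-c * x + c) = χ (-1) * (χ x * χ (1 - x)) := by
    intro x
    rw [show -c * x + c = c * (1 - x) by ring, neg_mul, neg_eq_neg_one_mul, map_mul, map_mul,
      map_mul]
    linear_combination χ (-1) * χ x * χ (1 - x) * quadraticChar_sq_one hc
  calc ∑ r, χ r * χ (r + c)
      = ∑ x, χ (-c * x) * χ (-c * x + c) :=
        (Equiv.sum_comp (Equiv.mulLeft₀ (-c) (neg_ne_zero.2 hc)) _).symm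
    _ = χ (-1) * jacobiSum χ χ := by simp only [hsubst, jacobiSum, mul_sum]
    _ = -1 := by
      rw [hJ, mul_neg, ← sq, quadraticChar_sq_one (neg_ne_zero.2 one_ne_zero)]

lemma eq_add_mul_quadraticChar {R : Type*} [Ring R] {v : F → R} {α β : R}
    (hsq : ∀ k, k ≠ 0 → IsSquare k → v k = α + β)
    (hnsq : ∀ k, k ≠ 0 → ¬IsSquare k → v k = α - β) {k : F} (hk : k ≠ 0) :
    v k = α + β * quadraticChar F k := by
  by_cases hs : IsSquare k
  · rw [hsq k hk hs, (quadraticChar_one_iff_isSquare hk).2 hs, Int.cast_one, mul_one]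
  · rw [hnsq k hk hs, quadraticChar_neg_one_iff_not_isSquare.2 hs, Int.cast_neg, Int.cast_one,
      mul_neg_one, sub_eq_add_neg]

lemma sum_mul_add_of_eq_add_mul_quadraticChar {R : Type*} [CommRing R] (hF : ringChar F ≠ 2)
    {u w : F → R} {α β γ δ : R}
    (hu : ∀ k, k ≠ 0 → u k = α + β * quadraticChar F k)
    (hw : ∀ k, k ≠ 0 → w k = γ + δ * quadraticChar F k) {c : F} (hc : c ≠ 0) :
    ∑ k, u k * w (k + c) = u 0 * w c + u (-c) * w 0 + (Fintype.card F - 2) * α * γ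
      - α * δ * quadraticChar F c - β * γ * quadraticChar F (-c) - β * δ := by
  set χ := quadraticChar F
  set g : F → R := fun k => (α + β * χ k) * (γ + δ * χ (k + c))
  have hg : ∑ k, g k = Fintype.card F * α * γ - β * δ := by
    have h1 : ∑ k, (χ k : R) = 0 := by
      rw [← Int.cast_sum, quadraticChar_sum_zero hF, Int.cast_zero]
    have h2 : ∑ k, (χ (k + c) : R) = 0 := by
      rw [← Int.cast_sum, quadraticChar_sum_add hF, Int.cast_zero]
    have h3 : ∑ k, (χ k : R) * χ (k + c) = -1 := by
      have h := congrArg (Int.cast : ℤ → R) (quadraticChar_sum_mul_add hF hc)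
      push_cast at h
      exact h
    have hexp : ∀ k, g k = α * γ + α * δ * χ (k + c) + β * γ * χ k + β * δ * (χ k * χ (k + c)) :=
      fun k => by ring
    simp only [hexp, sum_add_distrib, ← mul_sum, h1, h2, h3, sum_const, card_univ, nsmul_eq_mul]
    ring
  have hdiff := Fintype.sum_eq_add (f := fun k => u k * w (k + c) - g k) 0 (-c)
    (by simpa using hc) fun k ⟨hk0, hkc⟩ => by
      rw [hu k hk0, hw (k + c) fun h => hkc (eq_neg_of_add_eq_zero_left h), sub_self]
  have hg0 : g 0 = α * (γ + δ * χ c) := by simp [g, χ]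
  have hgc : g (-c) = (α + β * χ (-c)) * γ := by simp [g, χ]
  rw [sum_sub_distrib, hg, zero_add, neg_add_cancel, hg0, hgc] at hdiff
  linear_combination hdiff

/-- for d = p ≡ 3 (mod 8) prime and v the Legendre vector, for every
j ≠ 0 with (j/d) = 1 we have
`⟨v|X^{−2j}|v⟩ = (d−3)/2 − ((d−3)/4)(1/x₁²) − ((d+1)/4)x₁² + 2√x₀/x₁`. -/
theorem legendre_vector_xoverlap_3mod8 (p : ℕ) [NeZero p] (hp : p.Prime) (hp8 : p % 8 = 3)
    (x₁ : ℂ) (hx₁ : ‖x₁‖ = 1) (v : ZMod p → ℂ)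
    (hv0 : v 0 = Complex.I * Real.sqrt (2 + Real.sqrt (p + 1)))
    (hvQ : ∀ j : ZMod p, j ≠ 0 → IsSquare j → v j = x₁)
    (hvN : ∀ j : ZMod p, j ≠ 0 → ¬IsSquare j → v j = -1 / x₁) :
    ∀ j : ZMod p, j ≠ 0 → IsSquare j →
      ip v ((Xmat p ^ (-2 * j : ZMod p).val) *ᵥ v) =
        ((p : ℂ) - 3) / 2 - (((p : ℂ) - 3) / 4) * (1 / x₁ ^ 2)
          - (((p : ℂ) + 1) / 4) * x₁ ^ 2
          + 2 * (Complex.I * Real.sqrt (2 + Real.sqrt (p + 1))) / x₁ := by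
  have := Fact.mk hp
  intro j hj hjsq
  have hp2 : p ≠ 2 := by omega
  have hF : ringChar (ZMod p) ≠ 2 := by rwa [ZMod.ringChar_zmod_n]
  set χ := quadraticChar (ZMod p)
  have hχ2 : χ 2 = -1 := quadraticChar_neg_one_iff_not_isSquare.2 <| by
    rw [ZMod.exists_sq_eq_two_iff hp2]; omega
  have hχm1 : χ (-1) = -1 := quadraticChar_neg_one_iff_not_isSquare.2 <| by
    rw [ZMod.exists_sq_eq_neg_one_iff]; omega
  have hχc : χ (2 * j) = -1 := by
    rw [map_mul, hχ2, (quadraticChar_one_iff_isSquare hj).2 hjsq]; rfl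
  have hχnc : χ (-(2 * j)) = 1 := by rw [neg_eq_neg_one_mul, map_mul, hχm1, hχc]; rfl
  have hc : (2 * j : ZMod p) ≠ 0 := fun h => by simp [h, χ] at hχc
  have hx₁0 : x₁ ≠ 0 := norm_ne_zero_iff.1 (by simp [hx₁])
  have hconj : conj x₁ = x₁⁻¹ := (Complex.inv_eq_conj hx₁).symm
  have hv : ∀ k, k ≠ 0 → v k = (x₁ - x₁⁻¹) / 2 + (x₁ + x₁⁻¹) / 2 * χ k := fun k =>
    eq_add_mul_quadraticChar (fun k hk hs => by rw [hvQ k hk hs]; ring)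
      (fun k hk hs => by rw [hvN k hk hs]; ring)
  have hvc : ∀ k, k ≠ 0 → conj (v k) = (x₁⁻¹ - x₁) / 2 + (x₁⁻¹ + x₁) / 2 * χ k := fun k =>
    eq_add_mul_quadraticChar (v := fun k => conj (v k))
      (fun k hk hs => by simp only [hvQ k hk hs, hconj]; ring)
      (fun k hk hs => by
        simp only [hvN k hk hs, map_div₀, map_neg, map_one, hconj]; field_simp; ring)
  have hshift : ∀ k : ZMod p, k - -2 * j = k + 2 * j := fun k => by ring
  rw [ip_Xmat_pow_val_mulVec, Finset.sum_congr rfl fun k _ => by rw [hshift],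
    sum_mul_add_of_eq_add_mul_quadraticChar hF hvc hv hc, hvc _ (neg_ne_zero.2 hc), hv _ hc,
    hχc, hχnc, hv0, ZMod.card]
  simp only [map_mul, Complex.conj_I, Complex.conj_ofReal]
  push_cast
  field_simp
  ring
end QuadraticChar
end
end

section
/- Let d = p ≡ 7 (mod 8) be prime, x₀ = −2−√(d+1), and √x₀ the purely imaginary square root with positive imaginary part. Then x₁ = (√(−(d−3)(√(d+1)+1)) − x₀)/(√(d+1)·√x₀) is a complex number of modulus 1. -/
/-! With `s = √(d+1)`, `a = √((d-3)(s+1))` and `t = √(2+s)`, the numerator is `(2+s) + a i` and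
the denominator is `i s t`. Using `s² = d+1`, both have squared modulus `(d+1)(s+2)`. -/

open Complex

lemma norm_sq_x1_numerator (d : ℝ) (hd : 3 ≤ d) :
    ‖I * (√((d - 3) * (√(d + 1) + 1)) : ℂ) - ((-2 : ℂ) - (√(d + 1) : ℝ))‖ ^ 2
      = (d + 1) * (2 + √(d + 1)) := by
  have hs : √(d + 1) ^ 2 = d + 1 := Real.sq_sqrt (by linarith)
  have ha : √((d - 3) * (√(d + 1) + 1)) ^ 2 = (d - 3) * (√(d + 1) + 1) :=
    Real.sq_sqrt (mul_nonneg (by linarith) (by positivity))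
  rw [Complex.sq_norm, Complex.normSq_apply]
  simp only [sub_re, sub_im, mul_re, mul_im, I_re, I_im, ofReal_re, ofReal_im, neg_re, neg_im,
    re_ofNat, im_ofNat]
  linear_combination ha + hs

lemma norm_sq_x1_denominator (d : ℝ) (hd : -1 ≤ d) :
    ‖(√(d + 1) : ℂ) * (I * (√(2 + √(d + 1)) : ℂ))‖ ^ 2 = (d + 1) * (2 + √(d + 1)) := by
  rw [norm_mul, norm_mul, norm_I, one_mul, Complex.norm_real, Complex.norm_real,
    Real.norm_of_nonneg (Real.sqrt_nonneg _), Real.norm_of_nonneg (Real.sqrt_nonneg _), mul_pow,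
    Real.sq_sqrt (by linarith), Real.sq_sqrt (by positivity)]

theorem norm_x1_eq_one (d : ℝ) (hd : 3 ≤ d) :
    ‖(I * (√((d - 3) * (√(d + 1) + 1)) : ℂ) - ((-2 : ℂ) - (√(d + 1) : ℝ))) /
      ((√(d + 1) : ℂ) * (I * (√(2 + √(d + 1)) : ℂ)))‖ = 1 := by
  have hden : (√(d + 1) : ℂ) * (I * (√(2 + √(d + 1)) : ℂ)) ≠ 0 := by
    have hs : 0 < √(d + 1) := Real.sqrt_pos.2 (by linarith)
    have ht : 0 < √(2 + √(d + 1)) := Real.sqrt_pos.2 (by positivity)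
    exact mul_ne_zero (ofReal_ne_zero.2 hs.ne') (mul_ne_zero I_ne_zero (ofReal_ne_zero.2 ht.ne'))
  rw [norm_div, div_eq_one_iff_eq (norm_ne_zero_iff.2 hden)]
  refine (sq_eq_sq₀ (norm_nonneg _) (norm_nonneg _)).1 ?_
  rw [norm_sq_x1_numerator d hd, norm_sq_x1_denominator d (by linarith)]

theorem x1_unimodular_7mod8_general (p : ℕ) (hp8 : p % 8 = 7) :
    ‖((Complex.I * Real.sqrt (((p : ℝ) - 3) * (Real.sqrt (p + 1) + 1))
        - ((-2 : ℂ) - (Real.sqrt (p + 1) : ℝ))) /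
      ((Real.sqrt (p + 1) : ℂ) * (Complex.I * Real.sqrt (2 + Real.sqrt (p + 1)))))‖ = 1 :=
  norm_x1_eq_one p (by exact_mod_cast (show 3 ≤ p by omega))

/-- for d = p ≡ 7 (mod 8) prime, with x₀ = −2−√(d+1) and
√x₀ = i√(2+√(d+1)) the purely imaginary square root with positive imaginary part,
the number x₁ = (√(−(d−3)(√(d+1)+1)) − x₀)/(√(d+1)·√x₀) has modulus 1 (here
√(−(d−3)(√(d+1)+1)) = i√((d−3)(√(d+1)+1)), the purely imaginary branch). -/
theorem x1_unimodular_7mod8 (p : ℕ) (hp : p.Prime) (hp8 : p % 8 = 7) :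
    ‖((Complex.I * Real.sqrt (((p : ℝ) - 3) * (Real.sqrt (p + 1) + 1))
        - ((-2 : ℂ) - (Real.sqrt (p + 1) : ℝ))) /
      ((Real.sqrt (p + 1) : ℂ) * (Complex.I * Real.sqrt (2 + Real.sqrt (p + 1)))))‖ = 1 :=
  x1_unimodular_7mod8_general p hp8
end
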